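/- arXiv:1903.03245 — 4 statements merged into one kernel-verified Lean document; each statement's English description precedes it below -/
import Mathlib

section
/- Let G be a group, k a natural number, G' : Fin (k+1) → Type* a family of groups, e : G ≃* G' 0 a group isomorphism, G' (Fin.last k) a trivial group (Subsingleton), and for each i : Fin k let f i : G' i.castSucc →* G' i.succ be a surjective group homomorphism whose kernel is contained in the center of G' i.castSucc. For each j : Fin (k+1), let φ j : G →* G' j be the composite of e (viewed as a homomorphism) with the maps f 0, …, f (j-1), and let N j := MonoidHom.ker (φ j). Then N 0 = ⊥, N (Fin.last k) = ⊤, N is monotone, each N j is normal in G, and for each i : Fin k the commutator subgroup ⁅N i.succ, ⊤⁆ is contained in N i.castSucc; that is, N is a central series of length k for G. -/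
/-- The composite homomorphism `G' 0 →* G' j` obtained from the maps
`f i : G' i.castSucc →* G' i.succ`. -/
def towerHom {k : ℕ} {G' : Fin (k + 1) → Type*} [∀ j, Group (G' j)]
    (f : ∀ i : Fin k, G' i.castSucc →* G' i.succ) :
    ∀ (j : ℕ) (h : j < k + 1), G' 0 →* G' ⟨j, h⟩
  | 0, _ => MonoidHom.id _
  | j + 1, h =>
      (f ⟨j, Nat.lt_of_succ_lt_succ h⟩).comp (towerHom f j (Nat.lt_of_succ_lt h))

/-!
Since `φ i.succ = f i ∘ φ i.castSucc`, the kernel `N i.succ` is the preimage under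
`φ i.castSucc` of the central subgroup `ker (f i)`, so its commutators with arbitrary
elements are killed by `φ i.castSucc`.
-/

open scoped commutatorElement

namespace MonoidHom

variable {G H K : Type*} [Group G]

theorem ker_le_ker_comp [MulOneClass H] [MulOneClass K] (φ : G →* H) (g : H →* K) :
    φ.ker ≤ (g.comp φ).ker := fun x (hx : φ x = 1) =>
  show g (φ x) = 1 by rw [hx, map_one]

theorem commutator_ker_comp_top_le [Group H] [MulOneClass K] (φ : G →* H) (g : H →* K)
    (hg : g.ker ≤ Subgroup.center H) :
    ⁅(g.comp φ).ker, (⊤ : Subgroup G)⁆ ≤ φ.ker := by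
  rw [Subgroup.commutator_le]
  intro x hx y _
  have hcentral : φ x ∈ Subgroup.center H := hg hx
  rw [mem_ker, map_commutatorElement, commutatorElement_eq_one_iff_mul_comm]
  exact (Subgroup.mem_center_iff.mp hcentral _).symm

end MonoidHom

theorem kernels_of_central_tower_form_central_series_general
    {G : Type*} [Group G] {k : ℕ} (G' : Fin (k + 1) → Type*)
    [∀ j, Group (G' j)] (e : G ≃* G' 0) [Subsingleton (G' (Fin.last k))]
    (f : ∀ i : Fin k, G' i.castSucc →* G' i.succ)
    (hker : ∀ i, (f i).ker ≤ Subgroup.center (G' i.castSucc)) :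
    let φ : ∀ j : Fin (k + 1), G →* G' j :=
      fun j => (towerHom f j.1 j.2).comp e.toMonoidHom
    let N : Fin (k + 1) → Subgroup G := fun j => MonoidHom.ker (φ j)
    N 0 = ⊥ ∧ N (Fin.last k) = ⊤ ∧ Monotone N ∧ (∀ j, (N j).Normal) ∧
      ∀ i : Fin k, ⁅N i.succ, (⊤ : Subgroup G)⁆ ≤ N i.castSucc := by
  intro φ N
  -- `φ i.succ = (f i).comp (φ i.castSucc)` holds by `rfl`, from the recursion defining `towerHom`.
  refine ⟨(φ 0).ker_eq_bot e.injective, eq_top_iff.2 fun _ _ => Subsingleton.elim _ _,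
    Fin.monotone_iff_le_succ.2 fun i => ?_, fun j => MonoidHom.normal_ker _, fun i => ?_⟩
  · exact (φ i.castSucc).ker_le_ker_comp (f i)
  · exact (φ i.castSucc).commutator_ker_comp_top_le (f i) (hker i)

/-- Given a central tower of surjections for `G`, the kernels of the composite maps
`φ j : G →* G' j` form a central series of length `k` for `G`. -/
theorem kernels_of_central_tower_form_central_series
    {G : Type*} [Group G] {k : ℕ} (G' : Fin (k + 1) → Type*)
    [∀ j, Group (G' j)] (e : G ≃* G' 0) [Subsingleton (G' (Fin.last k))]
    (f : ∀ i : Fin k, G' i.castSucc →* G' i.succ)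
    (hsurj : ∀ i, Function.Surjective (f i))
    (hker : ∀ i, (f i).ker ≤ Subgroup.center (G' i.castSucc)) :
    let φ : ∀ j : Fin (k + 1), G →* G' j :=
      fun j => (towerHom f j.1 j.2).comp e.toMonoidHom
    let N : Fin (k + 1) → Subgroup G := fun j => MonoidHom.ker (φ j)
    N 0 = ⊥ ∧ N (Fin.last k) = ⊤ ∧ Monotone N ∧ (∀ j, (N j).Normal) ∧
      ∀ i : Fin k, ⁅N i.succ, (⊤ : Subgroup G)⁆ ≤ N i.castSucc :=
  kernels_of_central_tower_form_central_series_general G' e f hker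
end

section
/- Let A be an additive commutative group and let m, n : ℤ be coprime integers (IsCoprime m n). Then the map from A to the fiber product {p : A × A // m • p.1 = n • p.2} given by a ↦ (n • a, m • a) is a bijection. In other words, the commutative square with all four corners A, horizontal maps given by multiplication by n (i.e., a ↦ n • a) and vertical maps given by multiplication by m, is a pullback square. -/
/-- For coprime integers `m`, `n`, the square of multiplication maps on an
abelian group `A` (horizontal maps `n • ·`, vertical maps `m • ·`) is a pullback:
`a ↦ (n • a, m • a)` is a bijection onto the fiber product
`{p : A × A // m • p.1 = n • p.2}`. -/
theorem coprime_smul_square_is_pullback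
    {A : Type*} [AddCommGroup A] (m n : ℤ) (h : IsCoprime m n) :
    Function.Bijective (fun a : A =>
      (⟨(n • a, m • a), by rw [smul_comm]⟩ :
        {p : A × A // m • p.1 = n • p.2})) := by
  obtain ⟨α, β, hαβ⟩ := h
  constructor
  · intro a b hab
    have h1 : n • a = n • b := congrArg (fun p => p.1.1) hab
    have h2 : m • a = m • b := congrArg (fun p => p.1.2) hab
    calc a = (α * m + β * n) • a := by rw [hαβ, one_smul]
    _ = α • (m • a) + β • (n • a) := by rw [add_smul, mul_smul, mul_smul]
    _ = α • (m • b) + β • (n • b) := by rw [h1, h2]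
    _ = b := by rw [← mul_smul, ← mul_smul, ← add_smul, hαβ, one_smul]
  · rintro ⟨⟨x, y⟩, hp⟩
    simp only at hp
    refine ⟨α • y + β • x, Subtype.ext (Prod.ext ?_ ?_)⟩
    · show n • (α • y + β • x) = x
      calc n • (α • y + β • x) = α • (n • y) + β • (n • x) := by
            rw [smul_add, smul_comm n α, smul_comm n β]
      _ = α • (m • x) + β • (n • x) := by rw [hp]
      _ = (α * m + β * n) • x := by rw [add_smul, mul_smul, mul_smul]
      _ = x := by rw [hαβ, one_smul]
    · show m • (α • y + β • x) = y
      calc m • (α • y + β • x) = α • (m • y) + β • (m • x) := by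
            rw [smul_add, smul_comm m α, smul_comm m β]
      _ = α • (m • y) + β • (n • y) := by rw [hp]
      _ = (α * m + β * n) • y := by rw [add_smul, mul_smul, mul_smul]
      _ = y := by rw [hαβ, one_smul]
end

section
/- Let A be an additive commutative group and let m, n : ℤ be coprime integers (IsCoprime m n). Define f : A → A × A by f a = (m • a, n • a) and g : A × A → A by g (x, y) = n • x - m • y. Then f is injective, g is surjective, and the range of f equals the kernel of g; that is, 0 → A → A × A → A → 0 is a short exact sequence of abelian groups. -/
/-- For coprime integers `m`, `n`, the sequence
`0 → A → A × A → A → 0` with maps `a ↦ (m • a, n • a)` and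
`(x, y) ↦ n • x - m • y` is a short exact sequence of abelian groups. -/
theorem coprime_smul_short_exact
    {A : Type*} [AddCommGroup A] (m n : ℤ) (h : IsCoprime m n) :
    Function.Injective (fun a : A => ((m • a, n • a) : A × A)) ∧
    Function.Surjective (fun p : A × A => n • p.1 - m • p.2) ∧
    Set.range (fun a : A => ((m • a, n • a) : A × A)) =
      {p : A × A | n • p.1 - m • p.2 = 0} := by
  obtain ⟨α, β, hαβ⟩ := h
  refine ⟨?_, ?_, ?_⟩
  · intro a b hab
    have h1 : m • a = m • b := congrArg Prod.fst hab
    have h2 : n • a = n • b := congrArg Prod.snd hab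
    calc a = (α * m + β * n) • a := by rw [hαβ, one_smul]
      _ = α • (m • a) + β • (n • a) := by
          rw [add_smul, mul_smul, mul_smul]
      _ = α • (m • b) + β • (n • b) := by rw [h1, h2]
      _ = (α * m + β * n) • b := by rw [add_smul, mul_smul, mul_smul]
      _ = b := by rw [hαβ, one_smul]
  · intro c
    refine ⟨(β • c, -(α • c)), ?_⟩
    simp only [smul_neg, sub_neg_eq_add]
    calc n • β • c + m • α • c = (α * m + β * n) • c := by
          rw [add_smul, mul_smul, mul_smul, smul_comm n β, smul_comm m α, add_comm]
      _ = c := by rw [hαβ, one_smul]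
  · ext ⟨x, y⟩
    simp only [Set.mem_range, Set.mem_setOf_eq, Prod.mk.injEq]
    constructor
    · rintro ⟨a, ha1, ha2⟩
      rw [← ha1, ← ha2, smul_comm n m a, sub_self]
    · intro hxy
      have hk : n • x = m • y := by rwa [sub_eq_zero] at hxy
      refine ⟨α • x + β • y, ?_, ?_⟩
      · calc m • (α • x + β • y) = α • (m • x) + β • (m • y) := by
              rw [smul_add, smul_comm m α, smul_comm m β]
          _ = α • (m • x) + β • (n • x) := by rw [hk]
          _ = (α * m + β * n) • x := by rw [add_smul, mul_smul, mul_smul]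
          _ = x := by rw [hαβ, one_smul]
      · calc n • (α • x + β • y) = α • (n • x) + β • (n • y) := by
              rw [smul_add, smul_comm n α, smul_comm n β]
          _ = α • (m • y) + β • (n • y) := by rw [hk]
          _ = (α * m + β * n) • y := by rw [add_smul, mul_smul, mul_smul]
          _ = y := by rw [hαβ, one_smul]
end

section
/- Let A be an additive commutative group, regarded as a ℤ-module, and let S, T : Submonoid ℤ be such that every s ∈ S and every t ∈ T are coprime (IsCoprime (s : ℤ) (t : ℤ)). Let ι_S : A → LocalizedModule S A, ι_T : A → LocalizedModule T A, and ι : A → LocalizedModule (S ⊔ T) A be the localization maps, and let j_S : LocalizedModule S A → LocalizedModule (S ⊔ T) A and j_T : LocalizedModule T A → LocalizedModule (S ⊔ T) A be the unique ℤ-linear maps satisfying j_S ∘ ι_S = ι and j_T ∘ ι_T = ι (obtained from the universal property of localized modules, since every element of S, respectively T, acts invertibly on LocalizedModule (S ⊔ T) A). Then the map from A to the fiber product {p : LocalizedModule S A × LocalizedModule T A // j_S p.1 = j_T p.2} given by a ↦ (ι_S a, ι_T a) is a bijection. -/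
/-!
For `s ∈ S` and `t ∈ T` write `α * s + β * t = 1`. An element of `A` killed by both `s` and `t` is
zero, which gives injectivity. For surjectivity, write `x = a / s` and `y = b / t`; agreement in
the localization at `S ⊔ T` means, after enlarging `s` and `t`, that `t • a = s • b` in `A`, and
then `c = α • a + β • b` satisfies `s • c = a` and `t • c = b`, so it maps to `(x, y)`.
-/

namespace IsCoprime

variable {R M : Type*} [CommRing R] [AddCommGroup M] [Module R M] {s t : R}

theorem eq_of_smul_eq_of_smul_eq (h : IsCoprime s t) {m m' : M} (hs : s • m = s • m')
    (ht : t • m = t • m') : m = m' := by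
  obtain ⟨α, β, hαβ⟩ := h
  linear_combination (norm := module) α • hs + β • ht - hαβ • (m - m')

theorem exists_smul_eq_and_smul_eq (h : IsCoprime s t) {a b : M} (hab : t • a = s • b) :
    ∃ c : M, s • c = a ∧ t • c = b := by
  obtain ⟨α, β, hαβ⟩ := h
  refine ⟨α • a + β • b, ?_, ?_⟩
  · linear_combination (norm := module) -β • hab + hαβ • a
  · linear_combination (norm := module) α • hab + hαβ • b

end IsCoprime

namespace IsLocalizedModule

variable {R M MS MT MST : Type*} [CommRing R] [AddCommGroup M] [Module R M]
  [AddCommGroup MS] [Module R MS] [AddCommGroup MT] [Module R MT]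
  [AddCommGroup MST] [Module R MST] {S T : Submonoid R} (hco : ∀ s ∈ S, ∀ t ∈ T, IsCoprime s t)
  (fS : M →ₗ[R] MS) (fT : M →ₗ[R] MT) [IsLocalizedModule S fS] [IsLocalizedModule T fT]
include hco

theorem prod_injective_of_isCoprime : Function.Injective (fS.prod fT) := by
  intro m m' h
  obtain ⟨u, hu⟩ := exists_of_eq (S := S) (congrArg Prod.fst h)
  obtain ⟨v, hv⟩ := exists_of_eq (S := T) (congrArg Prod.snd h)
  exact (hco u u.2 v v.2).eq_of_smul_eq_of_smul_eq hu hv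

theorem exists_eq_and_eq_of_isCoprime (f : M →ₗ[R] MST) [IsLocalizedModule (S ⊔ T) f]
    (jS : MS →ₗ[R] MST) (jT : MT →ₗ[R] MST) (hjS : ∀ m, jS (fS m) = f m)
    (hjT : ∀ m, jT (fT m) = f m) {x : MS} {y : MT} (hxy : jS x = jT y) :
    ∃ m : M, fS m = x ∧ fT m = y := by
  obtain ⟨⟨a, s⟩, hs⟩ := surj S fS x
  obtain ⟨⟨b, t⟩, ht⟩ := surj T fT y
  rw [Submonoid.smul_def] at hs ht
  have hab : f ((t : R) • a) = f ((s : R) • b) := by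
    rw [map_smul, map_smul, ← hjS, ← hjT, ← hs, ← ht, map_smul, map_smul, hxy, smul_comm]
  obtain ⟨⟨u, hu⟩, hab'⟩ := exists_of_eq (S := S ⊔ T) hab
  obtain ⟨s', hs', t', ht', rfl⟩ := Submonoid.mem_sup.mp hu
  simp only [Submonoid.mk_smul, ← mul_smul] at hab'
  have key : ((t' : R) * t) • (s' • a) = (s' * s) • (t' • b) := by
    linear_combination (norm := module) hab'
  obtain ⟨c, hcS, hcT⟩ :=
    (hco _ (mul_mem hs' s.2) _ (mul_mem ht' t.2)).exists_smul_eq_and_smul_eq key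
  refine ⟨c, ?_, ?_⟩
  · refine (smul_inj fS ⟨_, mul_mem hs' s.2⟩ _ _).mp ?_
    simp only [Submonoid.mk_smul]
    rw [← map_smul, hcS, map_smul, mul_smul, hs]
  · refine (smul_inj fT ⟨_, mul_mem ht' t.2⟩ _ _).mp ?_
    simp only [Submonoid.mk_smul]
    rw [← map_smul, hcT, map_smul, mul_smul, ht]

end IsLocalizedModule

/-- Fracture square for localizations of an abelian group away from coprime sets
of integers: for submonoids `S`, `T` of `ℤ` with every element of `S` coprime to
every element of `T`, the square of localization maps of the `ℤ`-module `A` is a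
pullback, i.e. `a ↦ (ι_S a, ι_T a)` is a bijection onto the fiber product over
the localization at `S ⊔ T`. -/
theorem localizedModule_fracture_square
    {A : Type*} [AddCommGroup A] (S T : Submonoid ℤ)
    (hco : ∀ s ∈ S, ∀ t ∈ T, IsCoprime s t)
    (jS : LocalizedModule S A →ₗ[ℤ] LocalizedModule (S ⊔ T) A)
    (jT : LocalizedModule T A →ₗ[ℤ] LocalizedModule (S ⊔ T) A)
    (hjS : ∀ a : A, jS (LocalizedModule.mkLinearMap S A a) =
      LocalizedModule.mkLinearMap (S ⊔ T) A a)
    (hjT : ∀ a : A, jT (LocalizedModule.mkLinearMap T A a) =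
      LocalizedModule.mkLinearMap (S ⊔ T) A a) :
    Function.Bijective (fun a : A =>
      (⟨(LocalizedModule.mkLinearMap S A a, LocalizedModule.mkLinearMap T A a),
        by rw [hjS, hjT]⟩ :
        {p : LocalizedModule S A × LocalizedModule T A // jS p.1 = jT p.2})) := by
  -- `jS`, `jT` are linear for `AddCommGroup.toIntModule`, the localization maps for the module
  -- structure induced from `A`; these coincide since a `ℤ`-module structure is unique.
  let instLoc (U : Submonoid ℤ) : Module ℤ (LocalizedModule U A) :=
    OreLocalization.instModuleOfIsScalarTower
  revert jS jT
  generalize AddCommGroup.toIntModule (LocalizedModule S A) = IS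
  generalize AddCommGroup.toIntModule (LocalizedModule T A) = IT
  generalize AddCommGroup.toIntModule (LocalizedModule (S ⊔ T) A) = IST
  obtain rfl := Subsingleton.elim IS (instLoc S)
  obtain rfl := Subsingleton.elim IT (instLoc T)
  obtain rfl := Subsingleton.elim IST (instLoc (S ⊔ T))
  intro jS jT hjS hjT
  refine ⟨fun a a' h => ?_, fun ⟨⟨x, y⟩, hxy⟩ => ?_⟩
  · exact IsLocalizedModule.prod_injective_of_isCoprime hco _ _ (congrArg Subtype.val h)
  · obtain ⟨a, hx, hy⟩ :=
      IsLocalizedModule.exists_eq_and_eq_of_isCoprime hco _ _ _ jS jT hjS hjT hxy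
    exact ⟨a, Subtype.ext (Prod.ext hx hy)⟩
end
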